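/- arXiv:1604.07240 — 4 statements merged into one kernel-verified Lean document; each statement's English description precedes it below -/
import Mathlib

section
/- For all j with 0 ≤ j ≤ κ, the α-reciprocal sequence satisfies s_j^{♯,α} = Σ_{l=0}^{j} α^{j-l} s_l^{♯}, where (s_l^{♯}) is the reciprocal sequence of (s_j). -/
open Matrix BigOperators

def IsMP {m n : Type*} [Fintype m] [Fintype n] (A : Matrix m n ℂ) (B : Matrix n m ℂ) : Prop :=
  A * B * A = A ∧ B * A * B = B ∧ (A * B)ᴴ = A * B ∧ (B * A)ᴴ = B * A

open Classical in
noncomputable def mp {m n : Type*} [Fintype m] [Fintype n] (A : Matrix m n ℂ) : Matrix n m ℂ :=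
  if h : ∃ B, IsMP A B then h.choose else 0

noncomputable def recip {p q : ℕ} (s : ℕ → Matrix (Fin p) (Fin q) ℂ) :
    ℕ → Matrix (Fin q) (Fin p) ℂ
  | 0 => mp (s 0)
  | (j+1) => -(mp (s 0) * ∑ l : Fin (j+1), s (j+1 - l.val) * recip s l.val)
termination_by j => j
decreasing_by exact l.isLt

noncomputable def shiftA {p q : ℕ} (α : ℂ) (s : ℕ → Matrix (Fin p) (Fin q) ℂ) :
    ℕ → Matrix (Fin p) (Fin q) ℂ
  | 0 => s 0
  | (j+1) => (-α) • s j + s (j+1)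

noncomputable def recipA {p q : ℕ} (α : ℂ) (s : ℕ → Matrix (Fin p) (Fin q) ℂ) :
    ℕ → Matrix (Fin q) (Fin p) ℂ :=
  recip (shiftA α s)

lemma recip_zero {p q : ℕ} (s : ℕ → Matrix (Fin p) (Fin q) ℂ) : recip s 0 = mp (s 0) := by
  rw [recip]

lemma recip_succ {p q : ℕ} (s : ℕ → Matrix (Fin p) (Fin q) ℂ) (j : ℕ) :
    recip s (j+1) = -(mp (s 0) * ∑ l ∈ Finset.range (j+1), s (j+1 - l) * recip s l) := by
  rw [recip, Fin.sum_univ_eq_sum_range (fun l => s (j+1-l) * recip s l)]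

lemma mp_fix {m n : Type*} [Fintype m] [Fintype n] (A : Matrix m n ℂ) :
    mp A * A * mp A = mp A := by
  unfold mp
  split
  next h => exact h.choose_spec.2.1
  next => simp

lemma key_fix {p q : ℕ} (s : ℕ → Matrix (Fin p) (Fin q) ℂ) (m : ℕ) :
    mp (s 0) * s 0 * recip s m = recip s m := by
  cases m with
  | zero => rw [recip_zero]; exact mp_fix (s 0)
  | succ k => rw [recip_succ, Matrix.mul_neg, ← Matrix.mul_assoc, mp_fix]

lemma main_aux {p q : ℕ} (α : ℂ) (s : ℕ → Matrix (Fin p) (Fin q) ℂ) (j : ℕ) :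
    recipA α s j = ∑ l ∈ Finset.range (j + 1), α ^ (j - l) • recip s l := by
  induction j using Nat.strong_induction_on with
  | _ j ih =>
  match j with
  | 0 => simp [recipA, recip_zero, shiftA]
  | (j+1) =>
    have h0 : shiftA α s 0 = s 0 := rfl
    rw [recipA, recip_succ, h0]
    have hsum : ∑ l ∈ Finset.range (j+1), shiftA α s (j+1-l) * recip (shiftA α s) l
        = ∑ l ∈ Finset.range (j+1), ∑ m ∈ Finset.range (l+1),
            α ^ (l - m) • (shiftA α s (j+1-l) * recip s m) := by
      refine Finset.sum_congr rfl fun l hl => ?_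
      rw [show recip (shiftA α s) l = recipA α s l from rfl,
        ih l (Finset.mem_range.mp hl), Matrix.mul_sum]
      exact Finset.sum_congr rfl fun m _ => (Matrix.mul_smul _ _ _)
    rw [hsum]
    have hswap : ∑ l ∈ Finset.range (j+1), ∑ m ∈ Finset.range (l+1),
            α ^ (l - m) • (shiftA α s (j+1-l) * recip s m)
        = ∑ m ∈ Finset.range (j+1), ∑ l ∈ Finset.Ico m (j+1),
            α ^ (l - m) • (shiftA α s (j+1-l) * recip s m) := by
      simp only [Finset.range_eq_Ico]
      exact (Finset.sum_Ico_Ico_comm 0 (j+1)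
        (fun m l => α ^ (l - m) • (shiftA α s (j+1-l) * recip s m))).symm
    rw [hswap]
    have hinner : ∀ m ∈ Finset.range (j+1),
        ∑ l ∈ Finset.Ico m (j+1), α ^ (l - m) • (shiftA α s (j+1-l) * recip s m)
          = s (j+1-m) * recip s m - α ^ (j+1-m) • (s 0 * recip s m) := by
      intro m hm
      have hm' : m ≤ j := Nat.lt_succ_iff.mp (Finset.mem_range.mp hm)
      have hT : ∑ l ∈ Finset.Ico m (j+1), α ^ (l - m) • shiftA α s (j+1-l)
          = s (j+1-m) - α ^ (j+1-m) • s 0 := by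
        rw [Finset.sum_Ico_eq_sum_range]
        have hstep : ∀ i ∈ Finset.range (j+1-m),
            α ^ (m + i - m) • shiftA α s (j+1-(m+i))
              = (fun i => α ^ i • s (j+1-m-i)) i - (fun i => α ^ i • s (j+1-m-i)) (i+1) := by
          intro i hi
          have hi' : i < j+1-m := Finset.mem_range.mp hi
          have e1 : m + i - m = i := by omega
          have e2 : j+1-(m+i) = (j-m-i)+1 := by omega
          have e3 : j+1-m-i = (j-m-i)+1 := by omega
          have e4 : j+1-m-(i+1) = j-m-i := by omega
          rw [e1, e2]
          simp only [e3, e4, shiftA]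
          rw [smul_add, sub_eq_add_neg, add_comm]
          congr 1
          simp [smul_smul, pow_succ]
        rw [Finset.sum_congr rfl hstep, Finset.sum_range_sub']
        have e5 : j+1-m-0 = j+1-m := by omega
        have e6 : j+1-m-(j+1-m) = 0 := by omega
        rw [e5, e6, pow_zero, one_smul]
      calc ∑ l ∈ Finset.Ico m (j+1), α ^ (l - m) • (shiftA α s (j+1-l) * recip s m)
          = (∑ l ∈ Finset.Ico m (j+1), α ^ (l - m) • shiftA α s (j+1-l)) * recip s m := by
            rw [Matrix.sum_mul]
            exact Finset.sum_congr rfl fun l _ => (Matrix.smul_mul _ _ _).symm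
        _ = s (j+1-m) * recip s m - α ^ (j+1-m) • (s 0 * recip s m) := by
            rw [hT, Matrix.sub_mul, Matrix.smul_mul]
    rw [Finset.sum_congr rfl hinner, Finset.sum_sub_distrib]
    rw [Matrix.mul_sub, neg_sub, sub_eq_add_neg, ← recip_succ, Matrix.mul_sum]
    have hfix : ∀ m ∈ Finset.range (j+1),
        mp (s 0) * (α ^ (j+1-m) • (s 0 * recip s m)) = α ^ (j+1-m) • recip s m := by
      intro m _
      rw [Matrix.mul_smul, ← Matrix.mul_assoc, key_fix]
    rw [Finset.sum_congr rfl hfix]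
    conv_rhs => rw [Finset.sum_range_succ]
    rw [Nat.sub_self, pow_zero, one_smul]

/-- Lemma 4.2: for all 0 ≤ j ≤ κ, s_j^{♯,α} = Σ_{l=0}^{j} α^{j-l} s_l^{♯}. -/
theorem stmt0 {p q : ℕ} (α : ℂ) (κ : ℕ∞) (s : ℕ → Matrix (Fin p) (Fin q) ℂ) :
    ∀ j : ℕ, (j : ℕ∞) ≤ κ →
      recipA α s j = ∑ l ∈ Finset.range (j + 1), α ^ (j - l) • recip s l := by
  intro j _
  exact main_aux α s j
end

section
/- The α-reciprocal sequence of any sequence of complex p×q matrices is first-term dominant: Ran(s_j^{♯,α}) ⊆ Ran(s_0^{†}) = (ker s_0)^{⊥} and (Ran s_0)^{⊥} ⊆ ker(s_j^{♯,α}) for all 0 ≤ j ≤ κ. In particular (s_j^{♯,α})_{j=0}^{κ} belongs to D_{q×p,κ}. -/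
open Matrix BigOperators

/-- α-reciprocal sequence defined via the sum formula (as in the context). -/
noncomputable def recipASum {p q : ℕ} (α : ℂ) (s : ℕ → Matrix (Fin p) (Fin q) ℂ) :
    ℕ → Matrix (Fin q) (Fin p) ℂ :=
  fun j => ∑ l ∈ Finset.range (j + 1), α ^ (j - l) • recip s l

/-- first-term dominance of a matrix sequence up to κ. -/
def FTD {a b : ℕ} (κ : ℕ∞) (t : ℕ → Matrix (Fin a) (Fin b) ℂ) : Prop :=
  ∀ j : ℕ, (j : ℕ∞) ≤ κ →
    LinearMap.ker (Matrix.toEuclideanLin (t 0)) ≤ LinearMap.ker (Matrix.toEuclideanLin (t j)) ∧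
    LinearMap.range (Matrix.toEuclideanLin (t j)) ≤ LinearMap.range (Matrix.toEuclideanLin (t 0))


/-! Every term of the reciprocal sequence has the form `s₀⁺ X` and vanishes on `ker s₀⁺`
(induction along the recursion), and both properties pass to the linear combinations
`s_j^{♯,α}`, whose zeroth term is `s₀⁺`; this is first-term dominance. The Moore–Penrose
identities `s₀⁺ = s₀ᴴ (s₀⁺)ᴴ s₀⁺ = s₀⁺ (s₀⁺)ᴴ s₀ᴴ` then give `Ran s₀⁺ ⊆ Ran s₀ᴴ = (ker s₀)ᗮ` and
`(Ran s₀)ᗮ = ker s₀ᴴ ⊆ ker s₀⁺`. -/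

section MoorePenrose

variable {𝕜 E F : Type*} [RCLike 𝕜] [NormedAddCommGroup E] [InnerProductSpace 𝕜 E]
  [NormedAddCommGroup F] [InnerProductSpace 𝕜 F] [FiniteDimensional 𝕜 E] [FiniteDimensional 𝕜 F]

/- For a right inverse `h` of `f` on its range, `g = Q ∘ h ∘ P` with `P`, `Q` the orthogonal
projections onto `range f` and `(ker f)ᗮ` satisfies `f ∘ g = P` and `g ∘ f = Q`. -/
theorem LinearMap.exists_moorePenrose_inverse (f : E →ₗ[𝕜] F) :
    ∃ g : F →ₗ[𝕜] E, f ∘ₗ g ∘ₗ f = f ∧ g ∘ₗ f ∘ₗ g = g ∧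
      (f ∘ₗ g).adjoint = f ∘ₗ g ∧ (g ∘ₗ f).adjoint = g ∘ₗ f := by
  obtain ⟨h, hh⟩ := f.rangeRestrict.exists_rightInverse_of_surjective f.range_rangeRestrict
  set K := (LinearMap.ker f)ᗮ
  set Q : E →ₗ[𝕜] E := (K.starProjection : E →ₗ[𝕜] E)
  set g : F →ₗ[𝕜] E := Q ∘ₗ h ∘ₗ ((LinearMap.range f).orthogonalProjectionOnto : F →ₗ[𝕜] _)
  have hfQ : ∀ x, f (Q x) = f x := fun x => by
    have hx := K.sub_starProjection_mem_orthogonal x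
    rw [Submodule.orthogonal_orthogonal, LinearMap.mem_ker, map_sub, sub_eq_zero] at hx
    exact hx.symm
  have hfg : f ∘ₗ g = (LinearMap.range f).starProjection := by
    ext y
    have hhP := congr($hh ((LinearMap.range f).orthogonalProjectionOnto y))
    simp only [g, LinearMap.comp_apply, hfQ]
    exact congr(Subtype.val $hhP)
  have hgf : g ∘ₗ f = Q := by
    ext x
    have hPf : (LinearMap.range f).orthogonalProjectionOnto (f x) = f.rangeRestrict x :=
      Submodule.orthogonalProjectionOnto_mem_subspace_eq_self (f.rangeRestrict x)
    have hker : h (f.rangeRestrict x) - x ∈ Kᗮ := by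
      rw [Submodule.orthogonal_orthogonal, LinearMap.mem_ker, map_sub, sub_eq_zero]
      exact congr(Subtype.val $(congr($hh (f.rangeRestrict x))))
    rw [← Submodule.starProjection_apply_eq_zero_iff, map_sub, sub_eq_zero] at hker
    simp only [g, LinearMap.comp_apply, ContinuousLinearMap.coe_coe, hPf]
    exact hker
  refine ⟨g, ?_, ?_, ?_, ?_⟩
  · rw [← LinearMap.comp_assoc, hfg]
    ext x
    exact Submodule.starProjection_eq_self_iff.mpr (LinearMap.mem_range_self f x)
  · rw [← LinearMap.comp_assoc, hgf]
    ext y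
    exact K.starProjection_eq_self_iff.mpr (K.starProjection_apply_mem _)
  · rw [hfg]; exact (Submodule.starProjection_isSymmetric _).adjoint_eq
  · rw [hgf]; exact (Submodule.starProjection_isSymmetric _).adjoint_eq

end MoorePenrose

theorem LinearMap.range_sum_smul_le {R M N ι : Type*} [CommSemiring R] [AddCommMonoid M]
    [AddCommMonoid N] [Module R M] [Module R N] {t : Finset ι} (c : ι → R) {f : ι → M →ₗ[R] N}
    {W : Submodule R N} (h : ∀ i ∈ t, LinearMap.range (f i) ≤ W) :
    LinearMap.range (∑ i ∈ t, c i • f i) ≤ W := by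
  rintro _ ⟨v, rfl⟩
  rw [LinearMap.sum_apply]
  exact W.sum_mem fun i hi => W.smul_mem (c i) (h i hi (LinearMap.mem_range_self (f i) v))

theorem LinearMap.le_ker_sum_smul {R M N ι : Type*} [CommSemiring R] [AddCommMonoid M]
    [AddCommMonoid N] [Module R M] [Module R N] {t : Finset ι} (c : ι → R) {f : ι → M →ₗ[R] N}
    {W : Submodule R M} (h : ∀ i ∈ t, W ≤ LinearMap.ker (f i)) :
    W ≤ LinearMap.ker (∑ i ∈ t, c i • f i) := by
  intro v hv
  rw [LinearMap.mem_ker, LinearMap.sum_apply]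
  exact Finset.sum_eq_zero fun i hi => by
    rw [LinearMap.smul_apply, LinearMap.mem_ker.mp (h i hi hv), smul_zero]

section MoorePenroseMatrix

variable {m n : Type*} [Fintype m] [Fintype n]

theorem IsMP.eq_conjTranspose_mul {A : Matrix m n ℂ} {B : Matrix n m ℂ} (h : IsMP A B) :
    B = Aᴴ * (Bᴴ * B) := by
  calc B = B * A * B := h.2.1.symm
    _ = Aᴴ * (Bᴴ * B) := by rw [← h.2.2.2, conjTranspose_mul, Matrix.mul_assoc]

theorem IsMP.eq_mul_conjTranspose {A : Matrix m n ℂ} {B : Matrix n m ℂ} (h : IsMP A B) :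
    B = B * Bᴴ * Aᴴ := by
  calc B = B * (A * B) := by rw [← Matrix.mul_assoc, h.2.1]
    _ = B * Bᴴ * Aᴴ := by rw [← h.2.2.1, conjTranspose_mul, Matrix.mul_assoc]

variable [DecidableEq m] [DecidableEq n]

theorem exists_isMP (A : Matrix m n ℂ) : ∃ B, IsMP A B := by
  obtain ⟨g, h₁, h₂, h₃, h₄⟩ := (Matrix.toEuclideanLin A).exists_moorePenrose_inverse
  refine ⟨Matrix.toEuclideanLin.symm g, ?_, ?_, ?_, ?_⟩ <;> apply Matrix.toEuclideanLin.injective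
  · simpa [LinearMap.comp_assoc] using h₁
  · simpa [LinearMap.comp_assoc] using h₂
  · rw [Matrix.toEuclideanLin_conjTranspose_eq_adjoint]
    simpa only [Matrix.toLpLin_mul_same, LinearEquiv.apply_symm_apply] using h₃
  · rw [Matrix.toEuclideanLin_conjTranspose_eq_adjoint]
    simpa only [Matrix.toLpLin_mul_same, LinearEquiv.apply_symm_apply] using h₄

theorem isMP_mp (A : Matrix m n ℂ) : IsMP A (mp A) := by
  rw [mp, dif_pos (exists_isMP A)]
  exact (exists_isMP A).choose_spec

variable {A : Matrix m n ℂ} {B : Matrix n m ℂ}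

theorem IsMP.range_le_orthogonal_ker (h : IsMP A B) :
    LinearMap.range (Matrix.toEuclideanLin B) ≤ (LinearMap.ker (Matrix.toEuclideanLin A))ᗮ := by
  rw [LinearMap.orthogonal_ker, ← Matrix.toEuclideanLin_conjTranspose_eq_adjoint,
    h.eq_conjTranspose_mul, Matrix.toLpLin_mul_same]
  exact LinearMap.range_comp_le_range _ _

theorem IsMP.orthogonal_range_le_ker (h : IsMP A B) :
    (LinearMap.range (Matrix.toEuclideanLin A))ᗮ ≤ LinearMap.ker (Matrix.toEuclideanLin B) := by
  rw [LinearMap.orthogonal_range, ← Matrix.toEuclideanLin_conjTranspose_eq_adjoint,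
    h.eq_mul_conjTranspose, Matrix.toLpLin_mul_same]
  exact LinearMap.ker_le_ker_comp _ _

end MoorePenroseMatrix

section Reciprocal

variable {p q : ℕ} (s : ℕ → Matrix (Fin p) (Fin q) ℂ)

theorem range_recip_le (l : ℕ) :
    LinearMap.range (Matrix.toEuclideanLin (recip s l)) ≤
      LinearMap.range (Matrix.toEuclideanLin (mp (s 0))) := by
  cases l with
  | zero => rw [recip]
  | succ j =>
    rw [recip, map_neg, LinearMap.range_neg, Matrix.toLpLin_mul_same]
    exact LinearMap.range_comp_le_range _ _

theorem ker_mp_le_ker_recip (l : ℕ) :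
    LinearMap.ker (Matrix.toEuclideanLin (mp (s 0))) ≤
      LinearMap.ker (Matrix.toEuclideanLin (recip s l)) := by
  induction l using Nat.strong_induction_on with
  | _ l ih =>
    cases l with
    | zero => rw [recip]
    | succ j =>
      intro v hv
      have hsum : Matrix.toEuclideanLin (∑ l : Fin (j + 1), s (j + 1 - l) * recip s l) v = 0 := by
        rw [map_sum, LinearMap.sum_apply]
        exact Finset.sum_eq_zero fun l _ => by
          rw [Matrix.toLpLin_mul_same, LinearMap.comp_apply, ih l l.isLt hv, map_zero]
      rw [LinearMap.mem_ker, recip, map_neg, Matrix.toLpLin_mul_same, LinearMap.neg_apply,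
        LinearMap.comp_apply, hsum, map_zero, neg_zero]

variable (α : ℂ)

theorem recipASum_zero : recipASum α s 0 = mp (s 0) := by
  simp [recipASum, recip]

theorem range_recipASum_le (j : ℕ) :
    LinearMap.range (Matrix.toEuclideanLin (recipASum α s j)) ≤
      LinearMap.range (Matrix.toEuclideanLin (mp (s 0))) := by
  simp only [recipASum, map_sum, map_smul]
  exact LinearMap.range_sum_smul_le _ fun l _ => range_recip_le s l

theorem ker_mp_le_ker_recipASum (j : ℕ) :
    LinearMap.ker (Matrix.toEuclideanLin (mp (s 0))) ≤
      LinearMap.ker (Matrix.toEuclideanLin (recipASum α s j)) := by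
  simp only [recipASum, map_sum, map_smul]
  exact LinearMap.le_ker_sum_smul _ fun l _ => ker_mp_le_ker_recip s l

end Reciprocal

/-- The α-reciprocal sequence is first-term dominant:
    Ran(s_j^{♯,α}) ⊆ (ker s_0)^⊥ and (Ran s_0)^⊥ ⊆ ker(s_j^{♯,α}) for all j ≤ κ;
    in particular it belongs to D_{q×p,κ}. -/
theorem stmt3 {p q : ℕ} (α : ℂ) (κ : ℕ∞) (s : ℕ → Matrix (Fin p) (Fin q) ℂ) :
    (∀ j : ℕ, (j : ℕ∞) ≤ κ →
      LinearMap.range (Matrix.toEuclideanLin (recipASum α s j)) ≤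
        (LinearMap.ker (Matrix.toEuclideanLin (s 0)))ᗮ ∧
      (LinearMap.range (Matrix.toEuclideanLin (s 0)))ᗮ ≤
        LinearMap.ker (Matrix.toEuclideanLin (recipASum α s j))) ∧
    FTD κ (recipASum α s) := by
  have hmp := isMP_mp (s 0)
  refine ⟨fun j _ => ⟨(range_recipASum_le s α j).trans hmp.range_le_orthogonal_ker,
    hmp.orthogonal_range_le_ker.trans (ker_mp_le_ker_recipASum s α j)⟩, fun j _ => ?_⟩
  rw [recipASum_zero]
  exact ⟨ker_mp_le_ker_recipASum s α j, range_recipASum_le s α j⟩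
end

section
/- The shortened negative α-reciprocal sequence satisfies s_0^{(1,α)} = s_0^{+} s_1^{[+,α]} s_0^{+} and, for 1 ≤ j ≤ κ−1, s_j^{(1,α)} = s_0^{+} s_{j+1}^{[+,α]} s_0^{+} − s_0^{+} Σ_{l=0}^{j-1} s_{j-l}^{[+,α]} s_l^{(1,α)}. -/
open Matrix BigOperators

/-- Recursion formulas for the shortened negative α-reciprocal sequence. -/
theorem stmt7 {p q : ℕ} (α : ℂ) (κ : ℕ∞) (hκ : 1 ≤ κ)
    (s : ℕ → Matrix (Fin p) (Fin q) ℂ) :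
    -(recipA α s 1) = mp (s 0) * shiftA α s 1 * mp (s 0) ∧
    (∀ j : ℕ, 1 ≤ j → (j : ℕ∞) + 1 ≤ κ →
      -(recipA α s (j + 1)) =
        mp (s 0) * shiftA α s (j + 1) * mp (s 0) -
          mp (s 0) * ∑ l ∈ Finset.range j, shiftA α s (j - l) * (-(recipA α s (l + 1)))) := by
  have h0 : shiftA α s 0 = s 0 := rfl
  constructor
  · show -(recip (shiftA α s) 1) = _
    rw [recip]
    simp [h0, recip, Matrix.mul_assoc]
  · intro j hj _
    show -(recip (shiftA α s) (j + 1)) = _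
    rw [recip]
    rw [Fin.sum_univ_succ]
    simp only [Fin.val_zero, Nat.sub_zero, Fin.val_succ, h0]
    have : (recip (shiftA α s) 0) = mp (s 0) := by rw [recip, h0]
    rw [this]
    have hsub : ∀ l, j + 1 - (l + 1) = j - l := fun l => by omega
    simp only [hsub]
    rw [Fin.sum_univ_eq_sum_range (fun l => shiftA α s (j - l) * recip (shiftA α s) (l + 1))]
    simp [recipA, mul_neg, Matrix.mul_add, Matrix.mul_assoc, Finset.sum_neg_distrib, sub_neg_eq_add]
end

section
/- If α ∈ ℝ and (s_j)_{j=0}^{κ} is an α-Stieltjes right-nonnegative definite sequence of complex q×q matrices (i.e., belongs to K^{≥}_{q,κ,α}), then the sequence (s_j^{(1,α)})_{j=0}^{κ−1} defined by s_j^{(1,α)} := -s_{j+1}^{♯,α} is again α-Stieltjes right-nonnegative definite, i.e., belongs to K^{≥}_{q,κ−1,α}. -/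
open Matrix BigOperators ComplexOrder

/-- block Hankel matrix H_n = [s_{j+k}]_{j,k=0}^{n}. -/
def hankelMat {p q : ℕ} (s : ℕ → Matrix (Fin p) (Fin q) ℂ) (n : ℕ) :
    Matrix (Fin (n + 1) × Fin p) (Fin (n + 1) × Fin q) ℂ :=
  Matrix.of fun jk lm => s (jk.1.val + lm.1.val) jk.2 lm.2

/-- block Hankel matrix K_n = [s_{j+k+1}]_{j,k=0}^{n}. -/
def hankelKMat {p q : ℕ} (s : ℕ → Matrix (Fin p) (Fin q) ℂ) (n : ℕ) :
    Matrix (Fin (n + 1) × Fin p) (Fin (n + 1) × Fin q) ℂ :=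
  Matrix.of fun jk lm => s (jk.1.val + lm.1.val + 1) jk.2 lm.2

/-- the class K^{≥}_{q,κ,α} of α-Stieltjes right-nonnegative definite sequences. -/
def Kgg {q : ℕ} (α : ℝ) (κ : ℕ∞) (s : ℕ → Matrix (Fin q) (Fin q) ℂ) : Prop :=
  (∀ n : ℕ, ((2 * n : ℕ) : ℕ∞) ≤ κ → (hankelMat s n).PosSemidef) ∧
  (∀ n : ℕ, ((2 * n + 1 : ℕ) : ℕ∞) ≤ κ →
    ((-(α : ℂ)) • hankelMat s n + hankelKMat s n).PosSemidef)

/-!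
Write `u = s^{[+,α]}`, `c = u^♯` and `C = ∑ cⱼ zʲ`, `U = ∑ uⱼ zʲ`. The recursion defining `c`
says `u₀⁺ (U C) = u₀⁺`; as `c = c u₀ u₀⁺` this gives `C U C = C`, and then `(C U) u₀⁺ = u₀⁺`.
So every higher coefficient of `U C` is killed by `C` from the left and every higher
coefficient of `C U` by `C` from the right. This turns the block Hankel matrices of
`s^{(1,α)} = -c_{·+1}` into congruences through block lower-triangular Toeplitz matrices:
`H_n(s^{(1,α)}) = L K_n(u) L*` with `L = [c_{j-k}]` and `K_n(u) = -α H_n(s) + K_n(s)`, and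
`-α H_n(s^{(1,α)}) + K_n(s^{(1,α)}) = M H_{n+1}(s) M*` with `M = [d_{j+1-k}]`, `d = c^{[+,α]}`.
For `L*` and `M*` to carry the same entries, `c` has to be Hermitian; this follows because `c`
also satisfies the mirrored recursion `c_{m+1} = -(∑ c_l u_{m+1-l}) u₀⁺`.
-/

theorem IsMP.unique {n : Type*} [Fintype n] {A B C : Matrix n n ℂ}
    (hB : IsMP A B) (hC : IsMP A C) : B = C := by
  obtain ⟨aba, bab, hab, hba⟩ := hB
  obtain ⟨aca, cac, hac, hca⟩ := hC
  have hAB : A * B = A * C :=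
    calc A * B = (A * C * A * B)ᴴ := by rw [aca, hab]
      _ = (A * B)ᴴ * (A * C)ᴴ := by rw [← conjTranspose_mul]; noncomm_ring
      _ = A * B * A * C := by rw [hab, hac]; noncomm_ring
      _ = A * C := by rw [aba]
  have hBA : B * A = C * A :=
    calc B * A = (B * (A * C * A))ᴴ := by rw [aca, hba]
      _ = (C * A)ᴴ * (B * A)ᴴ := by rw [← conjTranspose_mul]; noncomm_ring
      _ = C * (A * B * A) := by rw [hba, hca]; noncomm_ring
      _ = C * A := by rw [aba]
  calc B = B * A * B := bab.symm
    _ = C * A * C := by rw [hBA, mul_assoc, hAB, ← mul_assoc]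
    _ = C := cac

theorem mp_eq_of_isMP {n : Type*} [Fintype n] {A B : Matrix n n ℂ} (hB : IsMP A B) :
    mp A = B := by
  have h : ∃ B, IsMP A B := ⟨B, hB⟩
  rw [mp, dif_pos h]
  exact h.choose_spec.unique hB

theorem Matrix.IsHermitian.isMP_cfc_inv {n : Type*} [Fintype n] [DecidableEq n] {A : Matrix n n ℂ}
    (hA : A.IsHermitian) : IsMP A (cfc (·⁻¹ : ℝ → ℝ) A) := by
  have hcont : ∀ f : ℝ → ℝ, ContinuousOn f (spectrum ℝ A) :=
    fun f => A.finite_real_spectrum.continuousOn f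
  have hmul : ∀ f g : ℝ → ℝ, cfc f A * cfc g A = cfc (fun x => f x * g x) A :=
    fun f g => (cfc_mul f g A (hcont f) (hcont g)).symm
  have hAB : A * cfc (·⁻¹ : ℝ → ℝ) A = cfc (fun x : ℝ => x * x⁻¹) A := by
    rw [← hmul, cfc_id' ℝ A]
  have hBA : cfc (·⁻¹ : ℝ → ℝ) A * A = cfc (fun x : ℝ => x⁻¹ * x) A := by
    rw [← hmul, cfc_id' ℝ A]
  have hmulA : ∀ f : ℝ → ℝ, cfc f A * A = cfc (fun x => f x * x) A := fun f => by
    conv_lhs => arg 2; rw [← cfc_id' ℝ A]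
    exact hmul _ _
  refine ⟨?_, ?_, ?_, ?_⟩
  · rw [hAB, hmulA]
    conv_rhs => rw [← cfc_id' ℝ A]
    exact cfc_congr fun x _ => by rcases eq_or_ne x 0 with h | h <;> simp [h]
  · rw [hBA, hmul]
    exact cfc_congr fun x _ => by rcases eq_or_ne x 0 with h | h <;> simp [h]
  · rw [hAB]; exact cfc_predicate (p := IsSelfAdjoint) (R := ℝ) _ A
  · rw [hBA]; exact cfc_predicate (p := IsSelfAdjoint) (R := ℝ) _ A

theorem Matrix.IsHermitian.mp_isHermitian {n : Type*} [Fintype n] [DecidableEq n] {A : Matrix n n ℂ}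
    (hA : A.IsHermitian) : (mp A).IsHermitian := by
  rw [mp_eq_of_isMP hA.isMP_cfc_inv]
  exact cfc_predicate (p := IsSelfAdjoint) (R := ℝ) _ A

theorem Matrix.IsHermitian.mp_mul_mul_mp {n : Type*} [Fintype n] [DecidableEq n]
    {A : Matrix n n ℂ} (hA : A.IsHermitian) : mp A * A * mp A = mp A := by
  rw [mp_eq_of_isMP hA.isMP_cfc_inv]
  exact hA.isMP_cfc_inv.2.1

open PowerSeries
open Finset hiding mk

theorem PowerSeries.coeff_mul_mk {R : Type*} [Semiring R] (F : R⟦X⟧) (y : ℕ → R) (n : ℕ) :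
    coeff n (F * mk y) = ∑ i ∈ range (n + 1), coeff i F * y (n - i) := by
  rw [coeff_mul, Nat.sum_antidiagonal_eq_sum_range_succ (fun i l => coeff i F * coeff l (mk y))]
  simp only [coeff_mk]

theorem PowerSeries.sum_range_mul_eq_coeff_mul_sub {R : Type*} [Ring R] (x y : ℕ → R) (j b : ℕ) :
    ∑ a ∈ range (j + 1), x (j - a) * y (a + b + 1)
      = coeff (j + b + 1) (mk x * mk y) - coeff b (mk (fun d => x (d + j + 1)) * mk y) := by
  simp only [coeff_mul_mk, coeff_mk]
  rw [eq_sub_iff_add_eq, show j + b + 1 + 1 = (j + 1) + (b + 1) by ring,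
    sum_range_add (fun i => x i * y (j + b + 1 - i)),
    ← sum_range_reflect (fun i => x i * y (j + b + 1 - i))]
  congr 1 <;> refine sum_congr rfl fun a ha => ?_ <;> have := mem_range.mp ha <;> congr 2 <;> omega

theorem PowerSeries.coeff_mul_eq_coeff_mul_coeff_zero {R : Type*} [Semiring R] {F G : R⟦X⟧}
    (h : ∀ i m, coeff i F * coeff (m + 1) G = 0) (n : ℕ) :
    coeff n (F * G) = coeff n F * coeff 0 G := by
  cases n with
  | zero => simp [coeff_mul]
  | succ n =>
    rw [coeff_mul, Nat.sum_antidiagonal_succ', sum_eq_zero fun p _ => h p.1 p.2, add_zero]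

section Reciprocal

variable {q : ℕ} {u : ℕ → Matrix (Fin q) (Fin q) ℂ}

variable (u) in
theorem recip_zero_s10 : recip u 0 = mp (u 0) := by
  rw [recip]

variable (u) in
theorem recip_succ_s10 (m : ℕ) :
    recip u (m + 1) = -(mp (u 0) * ∑ p ∈ antidiagonal m, u (p.1 + 1) * recip u p.2) := by
  rw [recip, Fin.sum_univ_eq_sum_range (fun l => u (m + 1 - l) * recip u l),
    ← Nat.sum_antidiagonal_swap, Nat.sum_antidiagonal_eq_sum_range_succ_mk]
  congr 2
  refine sum_congr rfl fun l hl => ?_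
  rw [Prod.swap_prod_mk, Nat.sub_add_comm (Nat.lt_succ_iff.mp (mem_range.mp hl))]

theorem mp_mul_mul_recip (hmp : mp (u 0) * u 0 * mp (u 0) = mp (u 0)) (m : ℕ) :
    mp (u 0) * u 0 * recip u m = recip u m := by
  cases m with
  | zero => rw [recip_zero_s10, hmp]
  | succ m => rw [recip_succ_s10, mul_neg, ← mul_assoc, hmp]

theorem recip_mul_mul_mp (hmp : mp (u 0) * u 0 * mp (u 0) = mp (u 0)) (m : ℕ) :
    recip u m * u 0 * mp (u 0) = recip u m := by
  induction m using Nat.strong_induction_on with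
  | _ m ih =>
    cases m with
    | zero => rw [recip_zero_s10, hmp]
    | succ m =>
      have hsum : (∑ p ∈ antidiagonal m, u (p.1 + 1) * recip u p.2) * u 0 * mp (u 0)
          = ∑ p ∈ antidiagonal m, u (p.1 + 1) * recip u p.2 := by
        simp only [sum_mul, mul_assoc]
        refine sum_congr rfl fun p hp => ?_
        rw [← mul_assoc (recip u p.2), ih p.2 (Nat.antidiagonal.snd_lt hp)]
      rw [recip_succ_s10, neg_mul, neg_mul, mul_assoc (mp (u 0)), mul_assoc (mp (u 0)), hsum]

theorem mp_mul_coeff_succ_mul_recip (hmp : mp (u 0) * u 0 * mp (u 0) = mp (u 0)) (m : ℕ) :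
    mp (u 0) * coeff (m + 1) (mk u * mk (recip u)) = 0 := by
  rw [coeff_mul, Nat.sum_antidiagonal_succ]
  simp only [coeff_mk]
  rw [mul_add, ← mul_assoc, mp_mul_mul_recip hmp, recip_succ_s10, neg_add_cancel]

theorem recip_mul_coeff_succ_mul_recip (hmp : mp (u 0) * u 0 * mp (u 0) = mp (u 0)) (i m : ℕ) :
    recip u i * coeff (m + 1) (mk u * mk (recip u)) = 0 := by
  rw [← recip_mul_mul_mp hmp i, mul_assoc, mp_mul_coeff_succ_mul_recip hmp, mul_zero]

theorem mk_recip_mul_mk_mul_mk_recip (hmp : mp (u 0) * u 0 * mp (u 0) = mp (u 0)) :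
    mk (recip u) * mk u * mk (recip u) = mk (recip u) := by
  ext n
  rw [mul_assoc,
    coeff_mul_eq_coeff_mul_coeff_zero (by simpa using recip_mul_coeff_succ_mul_recip hmp)]
  simp [coeff_mul, recip_zero_s10, ← mul_assoc, recip_mul_mul_mp hmp]

theorem coeff_succ_mk_recip_mul_mk_mul_mp (hmp : mp (u 0) * u 0 * mp (u 0) = mp (u 0)) (m : ℕ) :
    coeff (m + 1) (mk (recip u) * mk u) * mp (u 0) = 0 := by
  induction m using Nat.strong_induction_on with
  | _ m ih =>
    have hrest : ∑ p ∈ antidiagonal m, coeff (p.1 + 1) (mk (recip u) * mk u) * recip u p.2 = 0 := by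
      have h := congrArg (coeff (m + 1)) (mk_recip_mul_mk_mul_mk_recip hmp)
      rw [coeff_mul, Nat.sum_antidiagonal_succ, coeff_mk] at h
      simpa [coeff_mul, recip_zero_s10, mp_mul_mul_recip hmp] using h
    rwa [sum_eq_single (m, 0), recip_zero_s10] at hrest
    · intro p hp hne
      have hp1 : p.1 < m := by
        obtain ⟨a, b⟩ := p
        simp only [HasAntidiagonal.mem_antidiagonal, ne_eq, Prod.mk.injEq] at hp hne ⊢
        omega
      rw [← mp_mul_mul_recip hmp p.2, ← mul_assoc, ← mul_assoc, ih p.1 hp1, zero_mul, zero_mul]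
    · simp

theorem coeff_succ_mk_recip_mul_mk_mul_recip (hmp : mp (u 0) * u 0 * mp (u 0) = mp (u 0))
    (i m : ℕ) : coeff (m + 1) (mk (recip u) * mk u) * recip u i = 0 := by
  rw [← mp_mul_mul_recip hmp i, ← mul_assoc, ← mul_assoc, coeff_succ_mk_recip_mul_mk_mul_mp hmp,
    zero_mul, zero_mul]

theorem recip_succ_eq_neg_sum_mul_mp (hmp : mp (u 0) * u 0 * mp (u 0) = mp (u 0)) (m : ℕ) :
    recip u (m + 1) = -((∑ p ∈ antidiagonal m, recip u p.1 * u (p.2 + 1)) * mp (u 0)) := by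
  have h := coeff_succ_mk_recip_mul_mk_mul_mp hmp m
  rw [coeff_mul, Nat.sum_antidiagonal_succ'] at h
  simp only [coeff_mk] at h
  rw [add_mul, mul_assoc, ← mul_assoc (recip u (m + 1)), recip_mul_mul_mp hmp] at h
  exact eq_neg_of_add_eq_zero_left h

theorem recip_isHermitian {m : ℕ} (hu : ∀ l ≤ m, (u l).IsHermitian) :
    (recip u m).IsHermitian := by
  have hmp := (hu 0 m.zero_le).mp_mul_mul_mp
  induction m using Nat.strong_induction_on with
  | _ m ih =>
    cases m with
    | zero => rw [recip_zero_s10]; exact (hu 0 le_rfl).mp_isHermitian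
    | succ m =>
      have hsum : (∑ p ∈ antidiagonal m, u (p.1 + 1) * recip u p.2)ᴴ
          = ∑ p ∈ antidiagonal m, recip u p.1 * u (p.2 + 1) := by
        rw [conjTranspose_sum, ← Nat.sum_antidiagonal_swap]
        refine sum_congr rfl fun p hp => ?_
        have hp' := mem_antidiagonal.mp hp
        rw [Prod.fst_swap, Prod.snd_swap, conjTranspose_mul,
          (hu (p.2 + 1) (by omega)).eq, (ih p.1 (by omega) fun l hl => hu l (by omega)).eq]
      rw [IsHermitian, recip_succ_s10, conjTranspose_neg, conjTranspose_mul, hsum,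
        (hu 0 (by omega)).mp_isHermitian.eq, ← recip_succ_eq_neg_sum_mul_mp hmp, recip_succ_s10]

theorem sum_range_recip_mul_mul_recip (hmp : mp (u 0) * u 0 * mp (u 0) = mp (u 0)) (j k : ℕ) :
    ∑ a ∈ range (j + 1), ∑ b ∈ range (k + 1), recip u (j - a) * u (a + b + 1) * recip u (k - b)
      = -recip u (j + k + 1) := by
  have hU : ∀ i m, coeff i (mk fun d => recip u (d + j + 1)) * coeff (m + 1) (mk u * mk (recip u))
      = 0 := fun i m => by
    rw [coeff_mk]; exact recip_mul_coeff_succ_mul_recip hmp _ m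
  calc ∑ a ∈ range (j + 1), ∑ b ∈ range (k + 1), recip u (j - a) * u (a + b + 1) * recip u (k - b)
      = ∑ b ∈ range (k + 1), (coeff (j + b + 1) (mk (recip u) * mk u)
          - coeff b (mk (fun d => recip u (d + j + 1)) * mk u)) * recip u (k - b) := by
        rw [sum_comm]
        simp only [← sum_mul, sum_range_mul_eq_coeff_mul_sub]
    _ = -coeff k (mk (fun d => recip u (d + j + 1)) * (mk u * mk (recip u))) := by
        simp only [sub_mul, coeff_succ_mk_recip_mul_mk_mul_recip hmp, zero_sub, sum_neg_distrib]
        rw [← mul_assoc, coeff_mul_mk]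
    _ = -recip u (j + k + 1) := by
        rw [coeff_mul_eq_coeff_mul_coeff_zero hU]
        simp [coeff_mul, recip_zero_s10, ← mul_assoc, recip_mul_mul_mp hmp, add_comm k j]

end Reciprocal

section Shift

variable {q : ℕ} (α : ℂ)

theorem mk_shiftA (x : ℕ → Matrix (Fin q) (Fin q) ℂ) : mk (shiftA α x) = mk x - α • (X * mk x) := by
  ext n
  cases n with
  | zero => simp [shiftA]
  | succ n => simp [shiftA, coeff_succ_X_mul, neg_smul, sub_eq_neg_add]

theorem mk_mul_mk_shiftA (x y : ℕ → Matrix (Fin q) (Fin q) ℂ) :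
    mk x * mk (shiftA α y) = mk (shiftA α x) * mk y := by
  rw [mk_shiftA, mk_shiftA, mul_sub, sub_mul, mul_smul_comm, smul_mul_assoc, ← mul_assoc,
    (commute_X _).eq, mul_assoc]

theorem sum_range_shiftA_mul (x h : ℕ → Matrix (Fin q) (Fin q) ℂ) (j b : ℕ) :
    ∑ a ∈ range (j + 2), shiftA α x (j + 1 - a) * h (a + b)
      = x (j + 1) * h b + ∑ a ∈ range (j + 1), x (j - a) * shiftA α h (a + b + 1) := by
  have hx : ∀ a ∈ range (j + 1), shiftA α x (j + 1 - a) * h (a + b)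
      = (-α) • (x (j - a) * h (a + b)) + x (j + 1 - a) * h (a + b) := fun a ha => by
    rw [show j + 1 - a = (j - a) + 1 by have := mem_range.mp ha; omega, shiftA, add_mul,
      smul_mul_assoc]
  have hh : ∀ a ∈ range (j + 1), x (j - a) * shiftA α h (a + b + 1)
      = (-α) • (x (j - a) * h (a + b)) + x (j - a) * h (a + b + 1) := fun a _ => by
    rw [shiftA, mul_add, mul_smul_comm]
  have hlast := sum_range_succ (fun a => x (j + 1 - a) * h (a + b)) (j + 1)
  have hfirst := sum_range_succ' (fun a => x (j + 1 - a) * h (a + b)) (j + 1)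
  simp only [Nat.add_sub_add_right, Nat.sub_zero, zero_add, Nat.sub_self] at hlast hfirst
  simp only [Nat.add_right_comm _ 1 b] at hfirst
  rw [sum_range_succ, sum_congr rfl hx, sum_congr rfl hh, sum_add_distrib, sum_add_distrib,
    Nat.sub_self, shiftA, add_assoc, ← hlast, hfirst]
  abel

theorem sum_range_mul_shiftA (g y : ℕ → Matrix (Fin q) (Fin q) ℂ) (k : ℕ) :
    ∑ b ∈ range (k + 2), g b * shiftA α y (k + 1 - b)
      = ∑ b ∈ range (k + 2), g b * y (k + 1 - b) - α • ∑ b ∈ range (k + 1), g b * y (k - b) := by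
  have hy : ∀ b ∈ range (k + 1), g b * shiftA α y (k + 1 - b)
      = g b * y (k + 1 - b) - α • (g b * y (k - b)) := fun b hb => by
    rw [show k + 1 - b = (k - b) + 1 by have := mem_range.mp hb; omega, shiftA, mul_add,
      mul_smul_comm, neg_smul]
    abel
  rw [sum_range_succ, sum_range_succ (fun b => g b * y (k + 1 - b)), sum_congr rfl hy,
    sum_sub_distrib, smul_sum, Nat.sub_self, shiftA]
  abel

end Shift

theorem sum_range_shiftA_recip_mul_mul {q : ℕ} (α : ℂ) {s : ℕ → Matrix (Fin q) (Fin q) ℂ}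
    (hmp : mp (s 0) * s 0 * mp (s 0) = mp (s 0)) (j k : ℕ) :
    ∑ a ∈ range (j + 2), ∑ b ∈ range (k + 2), shiftA α (recip (shiftA α s)) (j + 1 - a) * s (a + b)
        * shiftA α (recip (shiftA α s)) (k + 1 - b)
      = α • recip (shiftA α s) (j + k + 1) - recip (shiftA α s) (j + k + 2) := by
  have hmp' : mp (shiftA α s 0) * shiftA α s 0 * mp (shiftA α s 0) = mp (shiftA α s 0) := hmp
  have hsd : ∑ b ∈ range (k + 2), s b * shiftA α (recip (shiftA α s)) (k + 1 - b)
      = coeff (k + 1) (mk (shiftA α s) * mk (recip (shiftA α s))) := by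
    rw [← mk_mul_mk_shiftA, coeff_mul_mk]
    simp only [coeff_mk]
  calc ∑ a ∈ range (j + 2), ∑ b ∈ range (k + 2), shiftA α (recip (shiftA α s)) (j + 1 - a)
          * s (a + b) * shiftA α (recip (shiftA α s)) (k + 1 - b)
      = ∑ b ∈ range (k + 2), (recip (shiftA α s) (j + 1) * s b + ∑ a ∈ range (j + 1),
          recip (shiftA α s) (j - a) * shiftA α s (a + b + 1))
          * shiftA α (recip (shiftA α s)) (k + 1 - b) := by
        rw [sum_comm]
        simp only [← sum_mul, sum_range_shiftA_mul]
    _ = recip (shiftA α s) (j + 1) * coeff (k + 1) (mk (shiftA α s) * mk (recip (shiftA α s)))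
          + ∑ a ∈ range (j + 1), ∑ b ∈ range (k + 2), recip (shiftA α s) (j - a)
            * shiftA α s (a + b + 1) * shiftA α (recip (shiftA α s)) (k + 1 - b) := by
        rw [← hsd, mul_sum, sum_comm (s := range (j + 1))]
        simp only [add_mul, sum_add_distrib, sum_mul, mul_assoc]
    _ = α • recip (shiftA α s) (j + k + 1) - recip (shiftA α s) (j + k + 2) := by
        rw [recip_mul_coeff_succ_mul_recip hmp', zero_add]
        simp only [sum_range_mul_shiftA, sum_sub_distrib, ← smul_sum,
          sum_range_recip_mul_mul_recip hmp']
        rw [show j + (k + 1) + 1 = j + k + 2 by ring, smul_neg]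
        abel

namespace Matrix

theorem comp_mul {I J M K R : Type*} [Fintype J] [Fintype K] [NonUnitalNonAssocSemiring R]
    (A : Matrix I J (Matrix K K R)) (B : Matrix J M (Matrix K K R)) :
    comp I M K K R (A * B) = comp I J K K R A * comp J M K K R B := by
  ext
  exact sum_apply .. |>.trans <| .symm <| Fintype.sum_prod_type ..

theorem comp_conjTranspose {I J K R : Type*} [Star R] (A : Matrix I J (Matrix K K R)) :
    comp J I K K R Aᴴ = (comp I J K K R A)ᴴ := rfl

end Matrix

theorem Fin.sum_ite_val_le {M : Type*} [AddCommMonoid M] {n j : ℕ} (hj : j < n) (f : ℕ → M) :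
    ∑ a : Fin n, (if (a : ℕ) ≤ j then f a else 0) = ∑ a ∈ range (j + 1), f a := by
  rw [Fin.sum_univ_eq_sum_range (fun a => if a ≤ j then f a else 0), ← sum_filter]
  congr 1
  ext a
  simp only [mem_filter, mem_range]
  omega

def hankelOf {R : Type*} (n : ℕ) (h : ℕ → R) : Matrix (Fin n) (Fin n) R :=
  of fun a b => h (a + b)

def lowerToeplitz {R : Type*} [Zero R] (m n o : ℕ) (x : ℕ → R) : Matrix (Fin m) (Fin n) R :=
  of fun j a => if (a : ℕ) ≤ j + o then x (j + o - a) else 0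

theorem lowerToeplitz_mul_hankelOf_mul_conjTranspose_apply {R : Type*} [Semiring R] [StarRing R]
    {m n : ℕ} (o : ℕ) (x h : ℕ → R) {j k : Fin m} (hj : j + o < n) (hk : k + o < n) :
    (lowerToeplitz m n o x * hankelOf n h * (lowerToeplitz m n o x)ᴴ) j k
      = ∑ a ∈ range (j + o + 1), ∑ b ∈ range (k + o + 1),
          x (j + o - a) * h (a + b) * star (x (k + o - b)) := by
  simp only [mul_apply, conjTranspose_apply, lowerToeplitz, hankelOf, of_apply, sum_mul]
  rw [sum_comm, ← Fin.sum_ite_val_le hj]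
  refine sum_congr rfl fun a _ => ?_
  split_ifs with ha
  · rw [← Fin.sum_ite_val_le hk]
    refine sum_congr rfl fun b _ => ?_
    split_ifs <;> simp
  · simp

theorem Matrix.PosSemidef.comp_mul_mul_conjTranspose {I J K : Type*} [Fintype I] [Fintype J]
    [Fintype K] {H : Matrix J J (Matrix K K ℂ)} (hH : (comp J J K K ℂ H).PosSemidef)
    (T : Matrix I J (Matrix K K ℂ)) : (comp I I K K ℂ (T * H * Tᴴ)).PosSemidef := by
  rw [comp_mul, comp_mul, comp_conjTranspose]
  exact hH.mul_mul_conjTranspose_same _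

section Hankel

variable {q : ℕ} {s : ℕ → Matrix (Fin q) (Fin q) ℂ}

theorem isHermitian_of_posSemidef_hankelMat {n l : ℕ} (h : (hankelMat s n).PosSemidef)
    (hl : l ≤ 2 * n) : (s l).IsHermitian := by
  ext p r
  have := h.isHermitian.apply (⟨min l n, by omega⟩, p) (⟨l - min l n, by omega⟩, r)
  simp only [hankelMat, of_apply] at this
  rwa [Nat.add_sub_cancel' (min_le_left l n), Nat.sub_add_cancel (min_le_left l n)] at this

theorem shiftA_isHermitian {α : ℂ} (hα : IsSelfAdjoint α) {N : ℕ} (hs : ∀ l ≤ N, (s l).IsHermitian)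
    {l : ℕ} (hl : l ≤ N) : (shiftA α s l).IsHermitian := by
  cases l with
  | zero => exact hs 0 hl
  | succ l =>
    exact ((hs l (by omega)).smul hα.neg).add (hs (l + 1) hl)

theorem smul_hankelMat_add_hankelKMat (α : ℂ) (n : ℕ) :
    (-α) • hankelMat s n + hankelKMat s n
      = comp (Fin (n + 1)) (Fin (n + 1)) (Fin q) (Fin q) ℂ
          (hankelOf (n + 1) fun m => shiftA α s (m + 1)) := by
  ext
  simp [hankelMat, hankelKMat, hankelOf, shiftA]

theorem hankelMat_neg_recipA_succ (α : ℂ) (hmp : mp (s 0) * s 0 * mp (s 0) = mp (s 0)) {n : ℕ}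
    (hc : ∀ l ≤ n, (recipA α s l).IsHermitian) :
    hankelMat (fun j => -recipA α s (j + 1)) n
      = comp (Fin (n + 1)) (Fin (n + 1)) (Fin q) (Fin q) ℂ
          (lowerToeplitz (n + 1) (n + 1) 0 (recipA α s)
            * hankelOf (n + 1) (fun m => shiftA α s (m + 1))
            * (lowerToeplitz (n + 1) (n + 1) 0 (recipA α s))ᴴ) := by
  ext ⟨j, p⟩ ⟨k, r⟩
  have hmp' : mp (shiftA α s 0) * shiftA α s 0 * mp (shiftA α s 0) = mp (shiftA α s 0) := hmp
  have hstar : ∀ b ∈ range ((k : ℕ) + 1), star (recipA α s (k - b)) = recipA α s (k - b) :=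
    fun b _ => hc _ (by omega)
  rw [comp_apply, lowerToeplitz_mul_hankelOf_mul_conjTranspose_apply 0 _ _ (by omega) (by omega)]
  simp only [add_zero]
  rw [sum_congr rfl fun a _ => sum_congr rfl fun b hb => by rw [hstar b hb], recipA,
    sum_range_recip_mul_mul_recip hmp']
  simp [hankelMat]

theorem smul_hankelMat_add_hankelKMat_neg_recipA_succ (α : ℂ)
    (hmp : mp (s 0) * s 0 * mp (s 0) = mp (s 0)) {n : ℕ}
    (hd : ∀ l ≤ n + 1, (shiftA α (recipA α s) l).IsHermitian) :
    (-α) • hankelMat (fun j => -recipA α s (j + 1)) n + hankelKMat (fun j => -recipA α s (j + 1)) n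
      = comp (Fin (n + 1)) (Fin (n + 1)) (Fin q) (Fin q) ℂ
          (lowerToeplitz (n + 1) (n + 2) 1 (shiftA α (recipA α s)) * hankelOf (n + 2) s
            * (lowerToeplitz (n + 1) (n + 2) 1 (shiftA α (recipA α s)))ᴴ) := by
  ext ⟨j, p⟩ ⟨k, r⟩
  have hstar : ∀ b ∈ range ((k : ℕ) + 1 + 1),
      star (shiftA α (recipA α s) (k + 1 - b)) = shiftA α (recipA α s) (k + 1 - b) :=
    fun b _ => hd _ (by omega)
  rw [comp_apply, lowerToeplitz_mul_hankelOf_mul_conjTranspose_apply 1 _ _ (by omega) (by omega)]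
  rw [sum_congr rfl fun a _ => sum_congr rfl fun b hb => by rw [hstar b hb], recipA,
    sum_range_shiftA_recip_mul_mul α hmp]
  simp [hankelMat, hankelKMat, sub_eq_add_neg]

end Hankel

theorem ENat.natCast_succ_le_of_le_sub_one {κ : ℕ∞} (hκ : 1 ≤ κ) {m : ℕ}
    (h : (m : ℕ∞) ≤ κ - 1) : ((m + 1 : ℕ) : ℕ∞) ≤ κ := by
  push_cast
  exact add_le_of_le_tsub_right_of_le hκ h

/-- Prop 5.12(a): the shortened negative α-reciprocal sequence of an α-Stieltjes
    right-nonnegative definite sequence is again α-Stieltjes right-nonnegative definite. -/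
theorem stmt10 {q : ℕ} (α : ℝ) (κ : ℕ∞) (hκ : 1 ≤ κ)
    (s : ℕ → Matrix (Fin q) (Fin q) ℂ) (hs : Kgg α κ s) :
    Kgg α (κ - 1) (fun j => -(recipA (α : ℂ) s (j + 1))) := by
  obtain ⟨hH, hK⟩ := hs
  have hα : IsSelfAdjoint (α : ℂ) := Complex.conj_ofReal α
  have hmp : mp (s 0) * s 0 * mp (s 0) = mp (s 0) :=
    (isHermitian_of_posSemidef_hankelMat (hH 0 (by simp)) le_rfl).mp_mul_mul_mp
  have hrecip : ∀ N : ℕ, ((2 * N : ℕ) : ℕ∞) ≤ κ → ∀ l ≤ 2 * N, (recipA α s l).IsHermitian :=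
    fun N hN l hl => recip_isHermitian fun i hi =>
      shiftA_isHermitian hα (fun _ hj => isHermitian_of_posSemidef_hankelMat (hH N hN) hj)
        (hi.trans hl)
  refine ⟨fun n hn => ?_, fun n hn => ?_⟩
  · have hn' := ENat.natCast_succ_le_of_le_sub_one hκ hn
    rw [hankelMat_neg_recipA_succ α hmp fun l hl =>
      hrecip n ((Nat.cast_le.mpr (Nat.le_succ _)).trans hn') l (by omega)]
    exact (smul_hankelMat_add_hankelKMat (s := s) α n ▸ hK n hn').comp_mul_mul_conjTranspose _
  · have hn' := ENat.natCast_succ_le_of_le_sub_one hκ hn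
    rw [smul_hankelMat_add_hankelKMat_neg_recipA_succ α hmp fun l hl =>
      shiftA_isHermitian hα (hrecip (n + 1) hn') (by omega)]
    exact (hH (n + 1) hn').comp_mul_mul_conjTranspose _
end
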